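/- Let μ > 0, A ∈ ℝ^{m×n}, Q = μI + [[0, Aᵀ],[−A, 0]], and G_nag = [[−I, I],[I − Q/μ, −I]]. If ‖A‖ > 2μ, then G_nag has an eigenvalue with strictly positive real part; specifically, for any eigenvalue δ* of AᵀA with δ* > 4μ², λ* = −1 + √(√δ*/(2μ)) ± i√(√δ*/(2μ)) is an eigenvalue of G_nag with Re(λ*) > 0. -/

import Mathlib

open Matrix

/-- The matrix `Q = μI + [[0, Aᵀ],[−A, 0]]` of the quadratic game. -/
noncomputable def Qgame {n m : ℕ} (μ : ℝ) (A : Matrix (Fin m) (Fin n) ℝ) :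
    Matrix (Fin n ⊕ Fin m) (Fin n ⊕ Fin m) ℝ :=
  μ • (1 : Matrix (Fin n ⊕ Fin m) (Fin n ⊕ Fin m) ℝ) + Matrix.fromBlocks 0 Aᵀ (-A) 0

/-- The naive accelerated model matrix `G_nag = [[−I, I],[I − Q/μ, −I]]`. -/
noncomputable def Gnag {n m : ℕ} (μ : ℝ) (A : Matrix (Fin m) (Fin n) ℝ) :
    Matrix ((Fin n ⊕ Fin m) ⊕ (Fin n ⊕ Fin m)) ((Fin n ⊕ Fin m) ⊕ (Fin n ⊕ Fin m)) ℝ :=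
  Matrix.fromBlocks (-1) 1 (1 - μ⁻¹ • Qgame μ A) (-1)

/-- The spectral (ℓ²-operator) norm of a real matrix. -/
noncomputable def spectralNormReal {n m : ℕ} (A : Matrix (Fin m) (Fin n) ℝ) : ℝ :=
  ‖LinearMap.toContinuousLinearMap (Matrix.toEuclideanLin A)‖

/-!
If `AᵀA u = δ u` with `δ ≠ 0` and `β² = -δ`, then `(u, -β⁻¹ A u)` is a `β`-eigenvector of the
skew block `S = [[0, Aᵀ], [-A, 0]]`; and if `C x = γ x` with `(1 + λ)² = γ`, then
`(x, (1 + λ) x)` is a `λ`-eigenvector of `[[-I, I], [C, -I]]`. As `G_nag = [[-I, I], [-μ⁻¹ S, -I]]`,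
every `λ` with `(μ (1 + λ)²)² = -δ` is an eigenvalue of `G_nag`; the roots `λ = -1 + s (1 ± i)`,
`2 μ s² = √δ`, have real part `s - 1`, positive exactly when `δ > 4μ²`. Finally `‖A‖²` is an
eigenvalue of `AᵀA`: it is the maximum of the Rayleigh quotient of `A†A`.
-/

section
variable {K ι : Type*} [Field K] [Fintype ι] [DecidableEq ι]

theorem Matrix.mem_spectrum_iff_exists_mulVec_eq_smul {M : Matrix ι ι K} {a : K} :
    a ∈ spectrum K M ↔ ∃ v ≠ 0, M *ᵥ v = a • v := by
  rw [← spectrum_toLin', ← Module.End.hasEigenvalue_iff_mem_spectrum,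
    Module.End.hasEigenvalue_iff, Submodule.ne_bot_iff]
  simp only [Module.End.mem_eigenspace_iff, toLin'_apply]
  exact exists_congr fun v => and_comm

theorem Matrix.map_mem_spectrum_map {L : Type*} [Field L] (f : K →+* L) {M : Matrix ι ι K}
    {a : K} (h : a ∈ spectrum K M) : f a ∈ spectrum L (M.map f) := by
  rw [mem_spectrum_iff_isRoot_charpoly] at h ⊢
  rw [charpoly_map]
  exact h.map
end

open ContinuousLinearMap in
theorem ContinuousLinearMap.hasEigenvalue_adjoint_comp_self_opNorm_sq {𝕜 E F : Type*} [RCLike 𝕜]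
    [NormedAddCommGroup E] [InnerProductSpace 𝕜 E] [CompleteSpace E] [FiniteDimensional 𝕜 E]
    [Nontrivial E] [NormedAddCommGroup F] [InnerProductSpace 𝕜 F] [CompleteSpace F]
    (L : E →L[𝕜] F) :
    Module.End.HasEigenvalue ((adjoint L ∘L L : E →L[𝕜] E) : E →ₗ[𝕜] E) (‖L‖ ^ 2 : ℝ) := by
  set T : E →ₗ[𝕜] E := (adjoint L ∘L L).toLinearMap
  have hT : T.IsSymmetric := fun x y => by
    simp only [T, coe_coe, comp_apply, adjoint_inner_left, adjoint_inner_right]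
  have hR : ∀ x : E, RCLike.re (inner 𝕜 (T x) x) = ‖L x‖ ^ 2 := fun x =>
    (apply_norm_sq_eq_inner_adjoint_left L x).symm
  have hbound : ∀ x : { x : E // x ≠ 0 }, ‖L x‖ ^ 2 / ‖(x : E)‖ ^ 2 ≤ ‖L‖ ^ 2 := by
    rintro ⟨x, hx⟩
    rw [div_le_iff₀ (by positivity), ← mul_pow]
    exact pow_le_pow_left₀ (norm_nonneg _) (L.le_opNorm x) 2
  have hsup := hT.hasEigenvalue_iSup_of_finiteDimensional
  simp only [hR] at hsup
  convert hsup using 2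
  have : Nonempty { x : E // x ≠ 0 } := nonempty_subtype.mpr (exists_ne 0)
  refine le_antisymm ?_ (ciSup_le hbound)
  set s := ⨆ x : { x : E // x ≠ 0 }, ‖L x‖ ^ 2 / ‖(x : E)‖ ^ 2
  have hbdd : BddAbove (Set.range fun x : { x : E // x ≠ 0 } => ‖L x‖ ^ 2 / ‖(x : E)‖ ^ 2) :=
    ⟨‖L‖ ^ 2, Set.forall_mem_range.mpr hbound⟩
  have hs : 0 ≤ s := Real.iSup_nonneg fun _ => by positivity
  have hLx : ∀ x, ‖L x‖ ≤ √s * ‖x‖ := by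
    intro x
    rcases eq_or_ne x 0 with rfl | hx
    · simp
    have hle : ‖L x‖ ^ 2 / ‖x‖ ^ 2 ≤ s := le_ciSup hbdd ⟨x, hx⟩
    rw [div_le_iff₀ (by positivity)] at hle
    rw [← pow_le_pow_iff_left₀ (norm_nonneg _) (by positivity) two_ne_zero, mul_pow,
      Real.sq_sqrt hs]
    exact hle
  calc ‖L‖ ^ 2 ≤ √s ^ 2 :=
        pow_le_pow_left₀ (norm_nonneg _) (L.opNorm_le_bound (by positivity) hLx) 2
    _ = s := Real.sq_sqrt hs

theorem sq_spectralNormReal_mem_spectrum {n m : ℕ} (A : Matrix (Fin m) (Fin n) ℝ)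
    (hA : spectralNormReal A ≠ 0) : spectralNormReal A ^ 2 ∈ spectrum ℝ (Aᵀ * A) := by
  set L := LinearMap.toContinuousLinearMap (Matrix.toEuclideanLin A)
  have : Nontrivial (EuclideanSpace ℝ (Fin n)) := by
    by_contra h
    rw [not_nontrivial_iff_subsingleton] at h
    exact hA L.opNorm_subsingleton
  have hAA : ((ContinuousLinearMap.adjoint L ∘L L).toLinearMap) = (Aᵀ * A).toEuclideanLin := by
    rw [← conjTranspose_eq_transpose_of_trivial, ← LinearMap.adjoint_toContinuousLinearMap,
      ← toEuclideanLin_conjTranspose_eq_adjoint]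
    ext x : 1
    simp [L, toLpLin_apply, mulVec_mulVec]
  have heig := L.hasEigenvalue_adjoint_comp_self_opNorm_sq
  rwa [hAA, Module.End.hasEigenvalue_iff_mem_spectrum, spectrum_toLpLin] at heig

section
variable {ι κ : Type*} [Fintype ι] [Fintype κ]

theorem Matrix.fromBlocks_neg_one_one_mulVec_eq_smul {R : Type*} [CommRing R] [DecidableEq ι]
    {C : Matrix ι ι R} {x : ι → R} {γ a : R}
    (hx : C *ᵥ x = γ • x) (ha : (1 + a) ^ 2 = γ) :
    fromBlocks (-1) 1 C (-1) *ᵥ Sum.elim x ((1 + a) • x) =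
      a • Sum.elim x ((1 + a) • x) := by
  rw [fromBlocks_mulVec, Sum.elim_comp_inl, Sum.elim_comp_inr, mulVec_smul, hx, neg_mulVec,
    neg_mulVec, one_mulVec, one_mulVec]
  ext (i | i) <;> simp [← ha] <;> ring

theorem Matrix.fromBlocks_skew_mulVec_eq_smul {K : Type*} [Field K] {A : Matrix κ ι K}
    {u : ι → K} {δ β : K}
    (hu : (Aᵀ * A) *ᵥ u = δ • u) (hβ : β ^ 2 = -δ) (hβ0 : β ≠ 0) :
    fromBlocks 0 Aᵀ (-A) 0 *ᵥ Sum.elim u (-β⁻¹ • A *ᵥ u) =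
      β • Sum.elim u (-β⁻¹ • A *ᵥ u) := by
  have hδ : -β⁻¹ * δ = β := by field_simp; linear_combination -hβ
  rw [fromBlocks_mulVec, Sum.elim_comp_inl, Sum.elim_comp_inr, zero_mulVec, zero_mulVec,
    zero_add, add_zero, mulVec_smul, mulVec_mulVec, hu, smul_smul, hδ, neg_mulVec]
  ext (i | i) <;> simp [hβ0]
end

theorem Gnag_eq_fromBlocks {n m : ℕ} {μ : ℝ} (hμ : μ ≠ 0) (A : Matrix (Fin m) (Fin n) ℝ) :
    Gnag μ A = fromBlocks (-1) 1 (-μ⁻¹ • fromBlocks 0 Aᵀ (-A) 0) (-1) := by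
  rw [Gnag, Qgame, smul_add, smul_smul, inv_mul_cancel₀ hμ, one_smul, sub_add_eq_sub_sub,
    sub_self, zero_sub, neg_smul]

theorem Gnag_map_ofReal {n m : ℕ} {μ : ℝ} (hμ : μ ≠ 0) (A : Matrix (Fin m) (Fin n) ℝ) :
    (Gnag μ A).map Complex.ofReal = fromBlocks (-1) 1
      (-(μ : ℂ)⁻¹ • fromBlocks 0 (A.map Complex.ofReal)ᵀ (-A.map Complex.ofReal) 0) (-1) := by
  rw [Gnag_eq_fromBlocks hμ]
  simp [fromBlocks_map, Matrix.map_neg, Matrix.map_one,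
    Matrix.map_smulₛₗ _ Complex.ofReal μ⁻¹ fun a => Complex.ofReal_mul μ⁻¹ a, transpose_map]

theorem mem_spectrum_Gnag_map_ofReal {n m : ℕ} {μ : ℝ} (hμ : μ ≠ 0) {A : Matrix (Fin m) (Fin n) ℝ}
    {δ : ℝ} (hδ : (δ : ℂ) ∈ spectrum ℂ ((Aᵀ * A).map Complex.ofReal)) (hδ0 : δ ≠ 0) {a : ℂ}
    (ha : (μ * (1 + a) ^ 2) ^ 2 = -δ) : a ∈ spectrum ℂ ((Gnag μ A).map Complex.ofReal) := by
  set Ac := A.map Complex.ofReal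
  have hAA : (Aᵀ * A).map Complex.ofReal = Acᵀ * Ac := Matrix.map_mul (f := Complex.ofRealHom)
  obtain ⟨u, hu0, hu⟩ := mem_spectrum_iff_exists_mulVec_eq_smul.mp (hAA ▸ hδ)
  set β : ℂ := -μ * (1 + a) ^ 2
  have hβ : β ^ 2 = -δ := by linear_combination ha
  have hβ0 : β ≠ 0 := fun h => hδ0 (by simpa [h] using hβ)
  have hx := fromBlocks_skew_mulVec_eq_smul hu hβ hβ0
  have hC : (-(μ : ℂ)⁻¹ • fromBlocks 0 Acᵀ (-Ac) 0) *ᵥ Sum.elim u (-β⁻¹ • Ac *ᵥ u) =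
      (1 + a) ^ 2 • Sum.elim u (-β⁻¹ • Ac *ᵥ u) := by
    rw [smul_mulVec, hx, smul_smul]
    congr 1
    have : (μ : ℂ) ≠ 0 := Complex.ofReal_ne_zero.mpr hμ
    simp only [β]
    field_simp
  refine mem_spectrum_iff_exists_mulVec_eq_smul.mpr ⟨_, fun h => hu0 ?_,
    (Gnag_map_ofReal hμ A).symm ▸ fromBlocks_neg_one_one_mulVec_eq_smul hC rfl⟩
  funext i
  simpa using congrFun h (Sum.inl (Sum.inl i))

theorem one_lt_sqrt_sqrt_div {μ δ : ℝ} (hμ : 0 < μ) (hδ : 4 * μ ^ 2 < δ) :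
    1 < √(√δ / (2 * μ)) := by
  rw [Real.lt_sqrt zero_le_one, one_pow, one_lt_div (by positivity),
    Real.lt_sqrt (by positivity)]
  linarith

theorem mem_spectrum_Gnag_of_sq_eq_neg_one {n m : ℕ} {μ : ℝ} (hμ : 0 < μ)
    {A : Matrix (Fin m) (Fin n) ℝ} {δ : ℝ}
    (hδ : (δ : ℂ) ∈ spectrum ℂ ((Aᵀ * A).map Complex.ofReal)) (hδμ : 4 * μ ^ 2 < δ)
    {ε : ℂ} (hε : ε ^ 2 = -1) :
    ((-1 + √(√δ / (2 * μ)) : ℝ) : ℂ) + ε * (√(√δ / (2 * μ)) : ℝ) ∈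
      spectrum ℂ ((Gnag μ A).map Complex.ofReal) := by
  have hδ0 : 0 < δ := lt_of_le_of_lt (by positivity) hδμ
  set s := √(√δ / (2 * μ))
  have hs : 2 * μ * s ^ 2 = √δ := by
    rw [Real.sq_sqrt (by positivity)]
    field_simp
  have hsC : 2 * (μ : ℂ) * (s : ℂ) ^ 2 = (√δ : ℝ) := by exact_mod_cast hs
  have hr : ((√δ : ℝ) : ℂ) ^ 2 = δ := by exact_mod_cast Real.sq_sqrt hδ0.le
  have hroot : μ * (1 + (((-1 + s : ℝ) : ℂ) + ε * s)) ^ 2 = (√δ : ℝ) * ε := by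
    push_cast
    linear_combination (μ : ℂ) * s ^ 2 * hε + ε * hsC
  refine mem_spectrum_Gnag_map_ofReal hμ.ne' hδ hδ0.ne' ?_
  rw [hroot]
  linear_combination ε ^ 2 * hr + (δ : ℂ) * hε

theorem Gnag_unstable {n m : ℕ} (μ : ℝ) (hμ : 0 < μ)
    (A : Matrix (Fin m) (Fin n) ℝ) (hA : spectralNormReal A > 2 * μ) :
    (∃ lam ∈ spectrum ℂ ((Gnag μ A).map Complex.ofReal), 0 < lam.re) ∧
    ∀ δs : ℝ, (δs : ℂ) ∈ spectrum ℂ ((Aᵀ * A).map Complex.ofReal) → δs > 4 * μ^2 →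
      (((-1 + Real.sqrt (Real.sqrt δs / (2*μ)) : ℝ) : ℂ)
          + Complex.I * (Real.sqrt (Real.sqrt δs / (2*μ)) : ℝ)
          ∈ spectrum ℂ ((Gnag μ A).map Complex.ofReal)) ∧
      (((-1 + Real.sqrt (Real.sqrt δs / (2*μ)) : ℝ) : ℂ)
          - Complex.I * (Real.sqrt (Real.sqrt δs / (2*μ)) : ℝ)
          ∈ spectrum ℂ ((Gnag μ A).map Complex.ofReal)) ∧
      0 < -1 + Real.sqrt (Real.sqrt δs / (2*μ)) := by
  refine ⟨?_, fun δs hδs hgt => ⟨mem_spectrum_Gnag_of_sq_eq_neg_one hμ hδs hgt Complex.I_sq,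
    by simpa [sub_eq_add_neg] using
      mem_spectrum_Gnag_of_sq_eq_neg_one hμ hδs hgt (ε := -Complex.I) (by simp),
    by linarith [one_lt_sqrt_sqrt_div hμ hgt]⟩⟩
  have hnorm : spectralNormReal A ^ 2 ∈ spectrum ℝ (Aᵀ * A) :=
    sq_spectralNormReal_mem_spectrum A (lt_trans (by positivity) hA).ne'
  have hgt : 4 * μ ^ 2 < spectralNormReal A ^ 2 := by nlinarith
  refine ⟨_, mem_spectrum_Gnag_of_sq_eq_neg_one hμ
    (map_mem_spectrum_map Complex.ofRealHom hnorm) hgt Complex.I_sq, ?_⟩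
  rw [Complex.add_re, Complex.ofReal_re, Complex.I_mul_re, Complex.ofReal_im, neg_zero, add_zero]
  linarith [one_lt_sqrt_sqrt_div hμ hgt]
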